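/- For a reversible lazy random walk X̃ on a finite connected weighted graph (G,μ) with invariant distribution π, for every vertex x and all t ≥ 1: ‖P̃_t(x,·) − π‖_TV² ≤ (1/(8t)) · max_z E_z[τ̃_x], where τ̃_x is the hitting time of x by the lazy walk. -/

import Mathlib

/-!
The lazy walk is reversible with respect to `π`, and `diag(π) P̃` is a positive multiple of the
signless Laplacian `diag(deg) + μ`, so `P̃` is positive semidefinite on `L²(π)`; hence so is every
power `P̃ˢ`. Cauchy–Schwarz for the form `⟨·, diag(π) P̃ˢ ·⟩` makes `s ↦ P̃ˢ(x,x)` log-convex, and a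
bounded log-convex sequence is nonincreasing.

The first-step equations of `h = E_·[τ̃_x]` together with Kac's formula give
`π(x) (h - P̃ h) = π(x) - 𝟙_x`, which telescopes to
`∑_{s<N} (P̃ˢ(x,x) - π(x)) = π(x) E_x[h(X̃_N)] ≤ π(x) max_z E_z[τ̃_x]`.
By monotonicity the left side is at least `N (P̃ᴺ(x,x) - π(x))`. Finally, Cauchy–Schwarz bounds `4 ‖P̃_t(x,·) - π‖²_TV` by the
`χ²`-distance `∑_y (P̃_t(x,y) - π(y))² / π(y) = P̃²ᵗ(x,x) / π(x) - 1`, and `N = 2t` concludes.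
-/

open Finset Matrix

-- If `a (s + 1) > a s`, log-convexity keeps every later ratio `a (n + 1) / a n` above
-- `r = a (s + 1) / a s > 1`, so `a` would grow geometrically.
lemma antitone_of_sq_le_mul_of_le {a : ℕ → ℝ} {C : ℝ} (h0 : ∀ n, 0 ≤ a n) (hC : ∀ n, a n ≤ C)
    (hsq : ∀ n, a (n + 1) ^ 2 ≤ a n * a (n + 2)) : Antitone a := by
  refine antitone_nat_of_succ_le fun s => ?_
  by_contra! hs
  have has : 0 < a s := by
    refine (h0 s).lt_of_ne fun h => ?_
    nlinarith [hsq s, h0 (s + 2)]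
  set r := a (s + 1) / a s
  have hr : 1 < r := (one_lt_div has).2 hs
  have geom : ∀ k, a s * r ^ k ≤ a (s + k) ∧ r * a (s + k) ≤ a (s + k + 1) := by
    intro k
    induction k with
    | zero => simp [r, div_mul_cancel₀ _ has.ne']
    | succ k ih =>
      obtain ⟨hk, hk'⟩ := ih
      have hpos : 0 < a (s + k) := (by positivity : 0 < a s * r ^ k).trans_le hk
      refine ⟨by rw [pow_succ, ← add_assoc]; nlinarith, ?_⟩
      have := hsq (s + k)
      rw [← add_assoc, show s + k + 1 + 1 = s + k + 2 by ring]
      refine le_of_mul_le_mul_left ?_ hpos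
      nlinarith [h0 (s + k + 1)]
  obtain ⟨k, hk⟩ := pow_unbounded_of_one_lt (C / a s) hr
  rw [div_lt_iff₀ has] at hk
  nlinarith [(geom k).1, hC (s + k)]

lemma sq_sum_abs_sub_le {n : Type*} [Fintype n] {π : n → ℝ} (hπ : ∀ y, 0 < π y)
    (hπ1 : ∑ y, π y = 1) (p : n → ℝ) :
    (∑ y, |p y - π y|) ^ 2 ≤ ∑ y, (p y - π y) ^ 2 / π y := by
  simpa [hπ1, sq_abs] using sq_sum_div_le_sum_sq_div univ (fun y => |p y - π y|) fun y _ => hπ y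

namespace Matrix

variable {n : Type*} [Fintype n]

lemma PosSemidef.dotProduct_mulVec_sq_le {A : Matrix n n ℝ} (hA : A.PosSemidef) (u w : n → ℝ) :
    (u ⬝ᵥ A *ᵥ w) ^ 2 ≤ (u ⬝ᵥ A *ᵥ u) * (w ⬝ᵥ A *ᵥ w) := by
  have hsymm : w ⬝ᵥ A *ᵥ u = u ⬝ᵥ A *ᵥ w := by
    rw [dotProduct_mulVec, ← mulVec_transpose, dotProduct_comm,
      ← conjTranspose_eq_transpose_of_trivial, hA.isHermitian.eq]
  have hquad : ∀ c : ℝ,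
      0 ≤ (w ⬝ᵥ A *ᵥ w) * (c * c) + 2 * (u ⬝ᵥ A *ᵥ w) * c + u ⬝ᵥ A *ᵥ u := by
    intro c
    have := hA.dotProduct_mulVec_nonneg (u + c • w)
    simp only [star_trivial, mulVec_add, mulVec_smul, add_dotProduct, dotProduct_add,
      smul_dotProduct, dotProduct_smul, smul_eq_mul, hsymm] at this
    linarith
  have := discrim_le_zero hquad
  rw [discrim] at this
  nlinarith

variable [DecidableEq n]

lemma eq_pow_of_apply_succ {R : Type*} [Semiring R]
    {P : Matrix n n R} {Q : ℕ → Matrix n n R} (h0 : ∀ x y, Q 0 x y = if x = y then 1 else 0)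
    (hs : ∀ k x y, Q (k + 1) x y = ∑ z, Q k x z * P z y) (k : ℕ) : Q k = P ^ k := by
  induction k with
  | zero => ext x y; rw [h0, pow_zero, one_apply]
  | succ k ih => ext x y; rw [hs, pow_succ, mul_apply, ih]

lemma PosSemidef.sq_mul_apply_le {A : Matrix n n ℝ} (hA : A.PosSemidef) (P : Matrix n n ℝ)
    (x : n) : ((A * P) x x) ^ 2 ≤ A x x * (Pᵀ * A * P) x x := by
  set e : n → ℝ := Pi.single x 1
  have h1 : e ⬝ᵥ A *ᵥ e = A x x := by simp [e]
  have h2 : e ⬝ᵥ A *ᵥ (P *ᵥ e) = (A * P) x x := by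
    rw [mulVec_mulVec]
    simp [e]
  have h3 : (P *ᵥ e) ⬝ᵥ A *ᵥ (P *ᵥ e) = (Pᵀ * A * P) x x := by
    rw [dotProduct_comm, dotProduct_mulVec, ← mulVec_transpose, mulVec_mulVec, mulVec_mulVec]
    simp [e, mul_assoc]
  simpa only [h1, h2, h3] using hA.dotProduct_mulVec_sq_le e (P *ᵥ e)

lemma mulVec_apply_le_sup' [Nonempty n] {Q : Matrix n n ℝ}
    (hQ : Q ∈ rowStochastic ℝ n) (h : n → ℝ) (x : n) :
    (Q *ᵥ h) x ≤ univ.sup' univ_nonempty h :=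
  calc (Q *ᵥ h) x = ∑ y, Q x y * h y := rfl
    _ ≤ ∑ y, Q x y * univ.sup' univ_nonempty h := sum_le_sum fun y _ =>
        mul_le_mul_of_nonneg_left (le_sup' h (mem_univ y)) (nonneg_of_mem_rowStochastic hQ)
    _ = univ.sup' univ_nonempty h := by rw [← sum_mul, sum_row_of_mem_rowStochastic hQ, one_mul]

def IsHittingTime (P : Matrix n n ℝ) (x : n) (h : n → ℝ) : Prop :=
  h x = 0 ∧ ∀ z ≠ x, h z = 1 + (P *ᵥ h) z

variable {π : n → ℝ} {P : Matrix n n ℝ}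

lemma diagonal_mul_pow_eq_transpose_mul (h : (diagonal π * P).IsSymm) (k : ℕ) :
    diagonal π * P ^ k = (P ^ k)ᵀ * diagonal π := by
  have h1 : SemiconjBy (diagonal π) P Pᵀ := by
    rw [SemiconjBy, ← h.eq, transpose_mul, diagonal_transpose]
  rw [transpose_pow]
  exact (h1.pow_right k).eq

lemma PosSemidef.diagonal_mul_pow (hP : (diagonal π * P).PosSemidef) (hπ : 0 ≤ π) (s : ℕ) :
    (diagonal π * P ^ s).PosSemidef := by
  have hsymm : (diagonal π * P).IsSymm := isHermitian_iff_isSymm.1 hP.isHermitian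
  obtain ⟨k, rfl | rfl⟩ := Nat.even_or_odd' s
  · have := (PosSemidef.diagonal hπ).conjTranspose_mul_mul_same (P ^ k)
    rwa [conjTranspose_eq_transpose_of_trivial, ← diagonal_mul_pow_eq_transpose_mul hsymm,
      mul_assoc, ← pow_add, ← two_mul] at this
  · have := hP.conjTranspose_mul_mul_same (P ^ k)
    rw [conjTranspose_eq_transpose_of_trivial, ← mul_assoc,
      ← diagonal_mul_pow_eq_transpose_mul hsymm, mul_assoc, mul_assoc, ← pow_succ', ← pow_add]
      at this
    rwa [show 2 * k + 1 = k + (k + 1) by ring]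

lemma sq_pow_succ_apply_le (hπP : (diagonal π * P).PosSemidef) (hπ : ∀ y, 0 < π y) (x : n)
    (s : ℕ) : ((P ^ (s + 1)) x x) ^ 2 ≤ (P ^ s) x x * (P ^ (s + 2)) x x := by
  have hsymm : (diagonal π * P).IsSymm := isHermitian_iff_isSymm.1 hπP.isHermitian
  have h := (hπP.diagonal_mul_pow (fun y => (hπ y).le) s).sq_mul_apply_le P x
  have e : Pᵀ * (diagonal π * P ^ s) * P = diagonal π * P ^ (s + 2) := by
    have h1 := diagonal_mul_pow_eq_transpose_mul hsymm 1
    rw [pow_one] at h1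
    rw [← mul_assoc, ← h1, mul_assoc, mul_assoc, ← pow_succ, ← pow_succ']
  rw [e, mul_assoc, ← pow_succ] at h
  simp only [diagonal_mul] at h
  have hπx := hπ x
  refine le_of_mul_le_mul_left ?_ (by positivity : 0 < π x ^ 2)
  linarith

lemma antitone_pow_apply (hP : P ∈ rowStochastic ℝ n) (hπP : (diagonal π * P).PosSemidef)
    (hπ : ∀ y, 0 < π y) (x : n) : Antitone fun s => (P ^ s) x x :=
  antitone_of_sq_le_mul_of_le (fun s => nonneg_of_mem_rowStochastic (pow_mem hP s))
    (fun s => le_one_of_mem_rowStochastic (pow_mem hP s)) (sq_pow_succ_apply_le hπP hπ x)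

lemma vecMul_eq_self_of_isSymm (hP : P ∈ rowStochastic ℝ n) (hsymm : (diagonal π * P).IsSymm) :
    π ᵥ* P = π := by
  ext z
  calc (π ᵥ* P) z = ∑ y, π z * P z y :=
        sum_congr rfl fun y _ => by simpa [diagonal_mul] using hsymm.apply z y
    _ = π z := by rw [← mul_sum, sum_row_of_mem_rowStochastic hP, mul_one]

lemma sum_sq_sub_div_eq (hP : P ∈ rowStochastic ℝ n) (hsymm : (diagonal π * P).IsSymm)
    (hπ : ∀ y, 0 < π y) (hπ1 : ∑ y, π y = 1) (x : n) :
    ∑ y, (P x y - π y) ^ 2 / π y = (P * P) x x / π x - 1 := by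
  have term : ∀ y, (P x y - π y) ^ 2 / π y = P x y * P y x / π x - 2 * P x y + π y := by
    intro y
    have hrev : π y * P y x = π x * P x y := by simpa [diagonal_mul] using hsymm.apply x y
    field_simp [(hπ x).ne', (hπ y).ne']
    linear_combination (-P x y) * hrev
  rw [sum_congr rfl fun y _ => term y, sum_add_distrib, sum_sub_distrib, ← sum_div, ← mul_sum,
    ← mul_apply, sum_row_of_mem_rowStochastic hP, hπ1]
  ring

namespace IsHittingTime

variable {x : n} {h : n → ℝ}

-- Kac's formula: the mean return time `1 + (P *ᵥ h) x` to `x` is `1 / π x`.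
lemma mul_mulVec_apply (hh : IsHittingTime P x h) (hπP : π ᵥ* P = π) (hπ1 : ∑ y, π y = 1) :
    π x * (P *ᵥ h) x = 1 - π x := by
  have hzero : ∑ y, π y * (h y - (P *ᵥ h) y) = 0 := by
    simp only [mul_sub, sum_sub_distrib]
    change π ⬝ᵥ h - π ⬝ᵥ (P *ᵥ h) = 0
    rw [dotProduct_mulVec, hπP, sub_self]
  have hoff : ∑ y ∈ univ.erase x, π y * (h y - (P *ᵥ h) y) = 1 - π x := by
    rw [← hπ1, ← sum_erase_eq_sub (mem_univ x)]
    refine sum_congr rfl fun y hy => ?_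
    rw [hh.2 y (ne_of_mem_erase hy)]
    ring
  rw [← add_sum_erase _ _ (mem_univ x), hoff, hh.1] at hzero
  linarith

lemma smul_mulVec_sub (hh : IsHittingTime P x h) (hπP : π ᵥ* P = π) (hπ1 : ∑ y, π y = 1) :
    π x • (P *ᵥ h - h) = Pi.single x 1 - π x • 1 := by
  ext w
  by_cases hw : w = x
  · subst hw
    simp [hh.1, hh.mul_mulVec_apply hπP hπ1]
  · simp [hw, hh.2 w hw]

lemma sum_range_pow_apply_sub (hh : IsHittingTime P x h)
    (hP : P ∈ rowStochastic ℝ n) (hπP : π ᵥ* P = π) (hπ1 : ∑ y, π y = 1) (N : ℕ) :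
    ∑ s ∈ range N, ((P ^ s) x x - π x) = π x * (P ^ N *ᵥ h) x := by
  have step : ∀ s, (P ^ s) x x - π x = π x * (P ^ (s + 1) *ᵥ h) x - π x * (P ^ s *ᵥ h) x := by
    intro s
    have := congrArg (fun v => (P ^ s *ᵥ v) x) (hh.smul_mulVec_sub hπP hπ1)
    simp only [mulVec_smul, mulVec_sub, mulVec_mulVec, ← pow_succ,
      one_vecMul_of_mem_rowStochastic (pow_mem hP s)] at this
    simpa [mul_sub] using this.symm
  rw [sum_congr rfl fun s _ => step s, sum_range_sub (fun s => π x * (P ^ s *ᵥ h) x),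
    pow_zero, one_mulVec, hh.1, mul_zero, sub_zero]

end IsHittingTime

variable {x : n} {h : n → ℝ}

lemma natCast_mul_pow_apply_sub_le [Nonempty n] (hP : P ∈ rowStochastic ℝ n)
    (hπP : (diagonal π * P).PosSemidef) (hπ : ∀ y, 0 < π y) (hπ1 : ∑ y, π y = 1)
    (hh : IsHittingTime P x h) (N : ℕ) :
    N * ((P ^ N) x x - π x) ≤ π x * univ.sup' univ_nonempty h := by
  have hstat := vecMul_eq_self_of_isSymm hP (isHermitian_iff_isSymm.1 hπP.isHermitian)
  calc (N : ℝ) * ((P ^ N) x x - π x) ≤ ∑ s ∈ range N, ((P ^ s) x x - π x) := by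
        simpa using card_nsmul_le_sum (range N) _ _ fun s hs =>
          sub_le_sub_right (antitone_pow_apply hP hπP hπ x (mem_range.1 hs).le) (π x)
    _ = π x * (P ^ N *ᵥ h) x := hh.sum_range_pow_apply_sub hP hstat hπ1 N
    _ ≤ π x * univ.sup' univ_nonempty h :=
        mul_le_mul_of_nonneg_left (mulVec_apply_le_sup' (pow_mem hP N) h x) (hπ x).le

theorem sq_half_sum_abs_pow_sub_le [Nonempty n] (hP : P ∈ rowStochastic ℝ n)
    (hπP : (diagonal π * P).PosSemidef) (hπ : ∀ y, 0 < π y) (hπ1 : ∑ y, π y = 1)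
    (hh : IsHittingTime P x h) {t : ℕ} (ht : 1 ≤ t) :
    ((1 / 2) * ∑ y, |(P ^ t) x y - π y|) ^ 2 ≤ (1 / (8 * t)) * univ.sup' univ_nonempty h := by
  have hsymm : (diagonal π * P ^ t).IsSymm :=
    isHermitian_iff_isSymm.1 (hπP.diagonal_mul_pow (fun y => (hπ y).le) t).isHermitian
  have hchi := (sq_sum_abs_sub_le hπ hπ1 ((P ^ t) x)).trans_eq
    (sum_sq_sub_div_eq (pow_mem hP t) hsymm hπ hπ1 x)
  have hmix := natCast_mul_pow_apply_sub_le hP hπP hπ hπ1 hh (t + t)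
  rw [← pow_add] at hchi
  have hπx := hπ x
  have ht' : (1 : ℝ) ≤ t := by exact_mod_cast ht
  rw [div_sub_one hπx.ne', le_div_iff₀ hπx] at hchi
  push_cast at hmix
  generalize ∑ y, |(P ^ t) x y - π y| = S at hchi ⊢
  have key : S ^ 2 * (2 * t) ≤ univ.sup' univ_nonempty h := by
    refine le_of_mul_le_mul_left ?_ hπx
    nlinarith
  calc ((1 / 2) * S) ^ 2 = 1 / (8 * t) * (S ^ 2 * (2 * t)) := by field_simp; ring
    _ ≤ 1 / (8 * t) * univ.sup' univ_nonempty h := by gcongr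

end Matrix

section WeightedGraph

variable {V : Type*} [Fintype V]

noncomputable def normalizedDegree (μ : V → V → ℝ) (y : V) : ℝ :=
  (∑ w, μ y w) / ∑ x, ∑ w, μ x w

lemma normalizedDegree_pos {μ : V → V → ℝ} (hdeg : ∀ x, 0 < ∑ y, μ x y) (y : V) :
    0 < normalizedDegree μ y :=
  div_pos (hdeg y) (sum_pos (fun x _ => hdeg x) ⟨y, mem_univ y⟩)

lemma sum_normalizedDegree [Nonempty V] {μ : V → V → ℝ} (hdeg : ∀ x, 0 < ∑ y, μ x y) :
    ∑ y, normalizedDegree μ y = 1 := by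
  simp only [normalizedDegree, ← sum_div]
  rw [div_self (sum_pos (fun x _ => hdeg x) univ_nonempty).ne']

variable [DecidableEq V]

noncomputable def lazyWalk (μ : V → V → ℝ) : Matrix V V ℝ :=
  of fun x y => if x = y then 1 / 2 else μ x y / (2 * ∑ w, μ x w)

def signlessLaplacian (μ : V → V → ℝ) : Matrix V V ℝ :=
  diagonal (fun x => ∑ y, μ x y) + of μ

variable {μ : V → V → ℝ}

lemma posSemidef_signlessLaplacian (hsymm : ∀ x y, μ x y = μ y x) (hnn : ∀ x y, 0 ≤ μ x y) :
    (signlessLaplacian μ).PosSemidef := by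
  refine .of_dotProduct_mulVec_nonneg
    (isHermitian_iff_isSymm.2 (IsSymm.ext fun i j => ?_)) fun u => ?_
  · by_cases h : i = j
    · subst h; rfl
    · simp [signlessLaplacian, h, Ne.symm h, hsymm i j]
  · have hswap : ∑ y, ∑ z, μ y z * u z ^ 2 = ∑ y, ∑ z, μ y z * u y ^ 2 := by
      rw [sum_comm]
      exact sum_congr rfl fun y _ => sum_congr rfl fun z _ => by rw [hsymm]
    have hform : star u ⬝ᵥ signlessLaplacian μ *ᵥ u
        = ∑ y, ∑ z, μ y z * u y ^ 2 + ∑ y, ∑ z, μ y z * u y * u z := by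
      rw [signlessLaplacian, add_mulVec, dotProduct_add, star_trivial]
      congr 1
      · simp only [dotProduct, mulVec_diagonal, sum_mul, mul_sum]
        exact sum_congr rfl fun y _ => sum_congr rfl fun z _ => by ring
      · simp only [dotProduct, mulVec, of_apply, mul_sum]
        exact sum_congr rfl fun y _ => sum_congr rfl fun z _ => by ring
    have hsq : 0 ≤ ∑ y, ∑ z, μ y z * (u y + u z) ^ 2 :=
      sum_nonneg fun y _ => sum_nonneg fun z _ => mul_nonneg (hnn y z) (sq_nonneg _)
    have hexp : ∑ y, ∑ z, μ y z * (u y + u z) ^ 2 = ∑ y, ∑ z, μ y z * u y ^ 2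
        + 2 * ∑ y, ∑ z, μ y z * u y * u z + ∑ y, ∑ z, μ y z * u z ^ 2 := by
      simp only [mul_sum, ← sum_add_distrib]
      exact sum_congr rfl fun y _ => sum_congr rfl fun z _ => by ring
    linarith

lemma lazyWalk_apply_eq_ite_add (hloop : ∀ x, μ x x = 0) (x y : V) :
    lazyWalk μ x y = (if x = y then 1 / 2 else 0) + μ x y / (2 * ∑ w, μ x w) := by
  by_cases h : x = y
  · subst h
    simp [lazyWalk, hloop]
  · simp [lazyWalk, h]

lemma lazyWalk_mem_rowStochastic (hnn : ∀ x y, 0 ≤ μ x y) (hloop : ∀ x, μ x x = 0)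
    (hdeg : ∀ x, 0 < ∑ y, μ x y) : lazyWalk μ ∈ rowStochastic ℝ V := by
  refine mem_rowStochastic_iff_sum.2 ⟨fun x y => ?_, fun x => ?_⟩
  · have := hdeg x
    rw [lazyWalk_apply_eq_ite_add hloop]
    exact add_nonneg (by split_ifs <;> norm_num) (div_nonneg (hnn x y) (by positivity))
  · simp only [lazyWalk_apply_eq_ite_add hloop, sum_add_distrib, sum_ite_eq, mem_univ, if_true,
      ← sum_div]
    field_simp [(hdeg x).ne']
    ring

lemma diagonal_normalizedDegree_mul_lazyWalk (hloop : ∀ x, μ x x = 0)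
    (hdeg : ∀ x, 0 < ∑ y, μ x y) :
    diagonal (normalizedDegree μ) * lazyWalk μ
      = (2 * ∑ x, ∑ w, μ x w)⁻¹ • signlessLaplacian μ := by
  ext y z
  have := (hdeg y).ne'
  by_cases h : y = z
  · subst h
    simp [lazyWalk, signlessLaplacian, normalizedDegree, hloop]
    field_simp
  · simp [lazyWalk, signlessLaplacian, normalizedDegree, h]
    field_simp

lemma posSemidef_diagonal_normalizedDegree_mul_lazyWalk (hsymm : ∀ x y, μ x y = μ y x)
    (hnn : ∀ x y, 0 ≤ μ x y) (hloop : ∀ x, μ x x = 0) (hdeg : ∀ x, 0 < ∑ y, μ x y) :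
    (diagonal (normalizedDegree μ) * lazyWalk μ).PosSemidef := by
  rw [diagonal_normalizedDegree_mul_lazyWalk hloop hdeg]
  refine (posSemidef_signlessLaplacian hsymm hnn).smul (inv_nonneg.2 ?_)
  exact mul_nonneg zero_le_two (sum_nonneg fun x _ => (hdeg x).le)

end WeightedGraph

theorem stmt10_general {V : Type*} [Fintype V] [DecidableEq V] [Nonempty V]
    (μ : V → V → ℝ) (hμsymm : ∀ x y, μ x y = μ y x) (hμnn : ∀ x y, 0 ≤ μ x y)
    (hloop : ∀ x, μ x x = 0) (hdeg : ∀ x, 0 < ∑ y, μ x y)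
    -- lazy transition matrix
    (Ptil : V → V → ℝ)
    (hPtil : ∀ x y, Ptil x y = if x = y then 1 / 2 else μ x y / (2 * ∑ w, μ x w))
    -- t-step kernel
    (Pt : ℕ → V → V → ℝ)
    (hPt0 : ∀ x y, Pt 0 x y = if x = y then 1 else 0)
    (hPtsucc : ∀ n x y, Pt (n + 1) x y = ∑ z, Pt n x z * Ptil z y)
    -- invariant distribution
    (π : V → ℝ) (hπ : ∀ y, π y = (∑ w, μ y w) / ∑ x, ∑ w, μ x w)
    -- expected hitting times of the lazy walk
    (hitL : V → V → ℝ)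
    (hhit0 : ∀ x, hitL x x = 0)
    (hhit : ∀ z x, z ≠ x → hitL z x = 1 + ∑ y, Ptil z y * hitL y x) :
    ∀ (x : V) (t : ℕ), 1 ≤ t →
      ((1 / 2) * ∑ y, |Pt t x y - π y|) ^ 2
        ≤ (1 / (8 * t)) * Finset.univ.sup' Finset.univ_nonempty (fun z => hitL z x) := by
  intro x t ht
  obtain rfl : Ptil = lazyWalk μ := funext₂ fun a b => by rw [hPtil, lazyWalk, of_apply]
  obtain rfl : π = normalizedDegree μ := funext hπ
  obtain rfl : Pt = fun k => lazyWalk μ ^ k := funext (eq_pow_of_apply_succ hPt0 hPtsucc)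
  have hh : IsHittingTime (lazyWalk μ) x fun z => hitL z x :=
    ⟨hhit0 x, fun z hz => hhit z x hz⟩
  exact sq_half_sum_abs_pow_sub_le (lazyWalk_mem_rowStochastic hμnn hloop hdeg)
    (posSemidef_diagonal_normalizedDegree_mul_lazyWalk hμsymm hμnn hloop hdeg)
    (normalizedDegree_pos hdeg) (sum_normalizedDegree hdeg) hh ht

/-- For the reversible lazy random walk on a finite connected weighted graph, with
invariant distribution `π` and expected hitting times `hitL z x = E_z[τ̃_x]`,
`‖P̃_t(x,·) − π‖_TV² ≤ (1/(8t)) max_z E_z[τ̃_x]` for all `t ≥ 1`. -/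
theorem stmt10 {V : Type*} [Fintype V] [DecidableEq V] [Nonempty V]
    (μ : V → V → ℝ) (hμsymm : ∀ x y, μ x y = μ y x) (hμnn : ∀ x y, 0 ≤ μ x y)
    (hloop : ∀ x, μ x x = 0) (hdeg : ∀ x, 0 < ∑ y, μ x y)
    -- lazy transition matrix
    (Ptil : V → V → ℝ)
    (hPtil : ∀ x y, Ptil x y = if x = y then 1 / 2 else μ x y / (2 * ∑ w, μ x w))
    -- t-step kernel
    (Pt : ℕ → V → V → ℝ)
    (hPt0 : ∀ x y, Pt 0 x y = if x = y then 1 else 0)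
    (hPtsucc : ∀ n x y, Pt (n + 1) x y = ∑ z, Pt n x z * Ptil z y)
    -- connectivity (irreducibility)
    (hconn : ∀ x y, ∃ n, 0 < Pt n x y)
    -- invariant distribution
    (π : V → ℝ) (hπ : ∀ y, π y = (∑ w, μ y w) / ∑ x, ∑ w, μ x w)
    -- expected hitting times of the lazy walk
    (hitL : V → V → ℝ) (hhitnn : ∀ z x, 0 ≤ hitL z x)
    (hhit0 : ∀ x, hitL x x = 0)
    (hhit : ∀ z x, z ≠ x → hitL z x = 1 + ∑ y, Ptil z y * hitL y x) :
    ∀ (x : V) (t : ℕ), 1 ≤ t →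
      ((1 / 2) * ∑ y, |Pt t x y - π y|) ^ 2
        ≤ (1 / (8 * t)) * Finset.univ.sup' Finset.univ_nonempty (fun z => hitL z x) :=
  stmt10_general μ hμsymm hμnn hloop hdeg Ptil hPtil Pt hPt0 hPtsucc π hπ hitL hhit0 hhit
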